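/- The one-forms θ^a := Λ^{-1} Σ_i M^a_i ξ^i (a = 1, 2, 3) constitute a frame for the SO_q(3)-covariant calculus on the extended quantum Euclidean space: they commute with the coordinates, i.e. θ^a x^i = x^i θ^a for all a, i ∈ {1, 2, 3}, in any algebra B as in the context. -/
import Mathlib


noncomputable section

/-- The FRT R-matrix of `SO_q(3)`: `Rfrt q i j k l = R^{ij}_{kl}`, with indices
`0, 1, 2` corresponding to `(−, 0, +)` (i.e. to `1, 2, 3`). -/
def Rfrt (q : ℝ) (i j k l : Fin 3) : ℂ :=
  let Q : ℂ := (q : ℂ)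
  let s : ℂ := (Real.sqrt q : ℂ)
  match i.1, j.1, k.1, l.1 with
  | 0,0,0,0 => Q                        -- R^{11}_{11} = q
  | 2,2,2,2 => Q                        -- R^{33}_{33} = q
  | 1,1,1,1 => 1                        -- R^{22}_{22} = 1
  | 0,1,0,1 => 1                        -- R^{12}_{12} = 1
  | 1,0,1,0 => 1                        -- R^{21}_{21} = 1
  | 1,2,1,2 => 1                        -- R^{23}_{23} = 1
  | 2,1,2,1 => 1                        -- R^{32}_{32} = 1
  | 0,2,0,2 => Q⁻¹                      -- R^{13}_{13} = q⁻¹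
  | 2,0,2,0 => Q⁻¹                      -- R^{31}_{31} = q⁻¹
  | 1,0,0,1 => Q - Q⁻¹                  -- R^{21}_{12} = q − q⁻¹
  | 2,1,1,2 => Q - Q⁻¹                  -- R^{32}_{23} = q − q⁻¹
  | 2,0,0,2 => (Q - Q⁻¹) * (1 - Q⁻¹)    -- R^{31}_{13} = (q − q⁻¹)(1 − q⁻¹)
  | 1,1,0,2 => -(Q - Q⁻¹) * s⁻¹         -- R^{22}_{13} = −(q − q⁻¹) q^{-1/2}
  | 2,0,1,1 => -(Q - Q⁻¹) * s⁻¹         -- R^{31}_{22} = −(q − q⁻¹) q^{-1/2}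
  | _,_,_,_ => 0

/-- The braid matrix `R̂` of `SO_q(3)`, as a linear endomorphism (matrix) of `ℂ³ ⊗ ℂ³`:
`R̂^{ij}_{kl} = R^{ji}_{kl}`, with row index the pair `(i,j)` and column index `(k,l)`. -/
def Rhat (q : ℝ) : Matrix (Fin 3 × Fin 3) (Fin 3 × Fin 3) ℂ :=
  fun p r => Rfrt q p.2 p.1 r.1 r.2

/-- Data of an extended quantum Euclidean space inside a unital associative `ℂ`-algebra
`B`: coordinates `x^i`, differentials `ξ^i`, the dilatation `Λ` with inverse `Λi`, the
inverse `u` of `x²`, and the radius `ρ` with inverse `ρi`, subject to the defining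
relations (indices `0, 1, 2` correspond to `1, 2, 3`, i.e. to `(−, 0, +)`). -/
structure QSpace (q : ℝ) (B : Type*) [Ring B] [Algebra ℂ B] where
  x : Fin 3 → B
  ξ : Fin 3 → B
  Λ : B
  Λi : B
  u : B
  ρ : B
  ρi : B
  rel_x12 : x 0 * x 1 = (q : ℂ) • (x 1 * x 0)
  rel_x32 : x 2 * x 1 = ((q : ℂ))⁻¹ • (x 1 * x 2)
  rel_x31 : x 2 * x 0 - x 0 * x 2 = ((Real.sqrt q - (Real.sqrt q)⁻¹ : ℝ) : ℂ) • (x 1 * x 1)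
  rel_xξ : ∀ i j : Fin 3,
    x i * ξ j = (q : ℂ) • ∑ k : Fin 3, ∑ l : Fin 3, Rhat q (i, j) (k, l) • (ξ k * x l)
  rel_ΛΛi : Λ * Λi = 1
  rel_ΛiΛ : Λi * Λ = 1
  rel_xΛ : ∀ i : Fin 3, x i * Λ = (q : ℂ) • (Λ * x i)
  rel_ξΛ : ∀ i : Fin 3, ξ i * Λ = (q : ℂ) • (Λ * ξ i)
  rel_ux : u * x 1 = 1
  rel_xu : x 1 * u = 1
  rel_ρρi : ρ * ρi = 1
  rel_ρiρ : ρi * ρ = 1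
  rel_ρx : ∀ i : Fin 3, ρ * x i = x i * ρ
  rel_ρξ : ∀ i : Fin 3, ρ * ξ i = (q : ℂ) • (ξ i * ρ)
  rel_ρsq : ρ * ρ = (Real.sqrt q : ℂ) • (x 2 * x 0) + x 1 * x 1 +
    ((Real.sqrt q : ℂ))⁻¹ • (x 0 * x 2)

/-- The frame matrix `M = ‖θ^a_i‖`:
`M¹₁ = u`, `M²₁ = q^{1/2}(q+1) ρ⁻¹ u x³`, `M²₂ = ρ⁻¹`,
`M³₁ = −q^{3/2}(q+1) ρ⁻² u (x³)²`, `M³₂ = −(q+1) ρ⁻² x³`, `M³₃ = ρ⁻² x²`,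
all other entries zero. -/
def Mmat {q : ℝ} {B : Type*} [Ring B] [Algebra ℂ B] (D : QSpace q B) (a i : Fin 3) : B :=
  match a.1, i.1 with
  | 0, 0 => D.u
  | 1, 0 => ((Real.sqrt q * (q + 1) : ℝ) : ℂ) • (D.ρi * D.u * D.x 2)
  | 1, 1 => D.ρi
  | 2, 0 => -(((Real.sqrt q * q * (q + 1) : ℝ)) : ℂ) • (D.ρi * D.ρi * D.u * (D.x 2 * D.x 2))
  | 2, 1 => -(((q + 1 : ℝ)) : ℂ) • (D.ρi * D.ρi * D.x 2)
  | 2, 2 => D.ρi * D.ρi * D.x 1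
  | _, _ => 0

/-- The frame one-forms `θ^a = Λ⁻¹ Σ_i M^a_i ξ^i`. -/
def theta {q : ℝ} {B : Type*} [Ring B] [Algebra ℂ B] (D : QSpace q B) (a : Fin 3) : B :=
  D.Λi * ∑ i : Fin 3, Mmat D a i * D.ξ i


private theorem mulrw {B : Type*} [Ring B] {a b r : B} (h : a * b = r) (y : B) :
    a * (b * y) = r * y := by rw [← mul_assoc, h]

set_option maxHeartbeats 4000000 in
/-- The one-forms `θ^a = Λ⁻¹ Σ_i M^a_i ξ^i` constitute a frame:
they commute with the coordinates, `θ^a x^i = x^i θ^a` for all `a, i`, in any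
algebra `B` as in the context. -/
theorem frame_commutes (q : ℝ) (hq : 0 < q) (hq1 : q ≠ 1)
    {B : Type*} [Ring B] [Algebra ℂ B] (D : QSpace q B) :
    ∀ a i : Fin 3, theta D a * D.x i = D.x i * theta D a := by
  have hq0 : (q:ℂ) ≠ 0 := Complex.ofReal_ne_zero.mpr hq.ne'
  have hs0 : ((Real.sqrt q : ℝ) : ℂ) ≠ 0 := Complex.ofReal_ne_zero.mpr (by positivity : Real.sqrt q ≠ 0)
  have hq' : (q:ℂ) = ((Real.sqrt q : ℝ) : ℂ) * ((Real.sqrt q : ℝ) : ℂ) := by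
    rw [← Complex.ofReal_mul, Real.mul_self_sqrt hq.le]
  -- Λ lemmas
  have Lx : ∀ j : Fin 3, D.x j * D.Λi = (q:ℂ)⁻¹ • (D.Λi * D.x j) := by
    intro j
    have key : D.Λi * D.x j = (q:ℂ) • (D.x j * D.Λi) := by
      have h1 : D.Λi * D.x j = D.Λi * (D.x j * D.Λ * D.Λi) := by
        rw [mul_assoc, D.rel_ΛΛi, mul_one]
      rw [h1, D.rel_xΛ, smul_mul_assoc, mul_smul_comm, ← mul_assoc, ← mul_assoc,
        D.rel_ΛiΛ, one_mul]
    rw [key, smul_smul, inv_mul_cancel₀ hq0, one_smul]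
  -- ρ lemmas
  have P : ∀ j : Fin 3, D.x j * D.ρi = D.ρi * D.x j := by
    intro j
    have h1 : D.x j * D.ρi = (D.ρi * D.ρ) * (D.x j * D.ρi) := by
      rw [D.rel_ρiρ, one_mul]
    rw [h1, mul_assoc, ← mul_assoc D.ρ, D.rel_ρx j, mul_assoc (D.x j), D.rel_ρρi, mul_one]
  -- u lemmas
  have U0 : D.u * D.x 0 = (q:ℂ) • (D.x 0 * D.u) := by
    have h1 : D.u * (D.x 0 * D.x 1) * D.u = D.u * D.x 0 := by
      rw [← mul_assoc, mul_assoc, D.rel_xu, mul_one]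
    rw [← h1, D.rel_x12, mul_smul_comm, smul_mul_assoc, ← mul_assoc, D.rel_ux, one_mul]
  have U2 : D.u * D.x 2 = (q:ℂ)⁻¹ • (D.x 2 * D.u) := by
    have h1 : D.u * (D.x 2 * D.x 1) * D.u = D.u * D.x 2 := by
      rw [← mul_assoc, mul_assoc, D.rel_xu, mul_one]
    rw [← h1, D.rel_x32, mul_smul_comm, smul_mul_assoc, ← mul_assoc, D.rel_ux, one_mul]
  -- x ordering lemmas
  have V0 : D.x 0 * D.u = (q:ℂ)⁻¹ • (D.u * D.x 0) := by
    rw [U0, smul_smul, inv_mul_cancel₀ hq0, one_smul]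
  have V2 : D.x 2 * D.u = (q:ℂ) • (D.u * D.x 2) := by
    rw [U2, smul_smul, mul_inv_cancel₀ hq0, one_smul]
  have X21 : D.x 2 * D.x 1 = (q:ℂ)⁻¹ • (D.x 1 * D.x 2) := D.rel_x32
  have X20 : D.x 2 * D.x 0 =
      ((Real.sqrt q - (Real.sqrt q)⁻¹ : ℝ) : ℂ) • (D.x 1 * D.x 1) + D.x 0 * D.x 2 :=
    sub_eq_iff_eq_add.mp D.rel_x31
  -- xξ expansion lemmas
  have A00 : D.x 0 * D.ξ 0 = ((q:ℂ) * (q:ℂ)) • (D.ξ 0 * D.x 0) := by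
    have h := D.rel_xξ 0 0
    simp only [Fin.sum_univ_three, show Rhat q (0,0) (0,0) = (q:ℂ) from rfl, show Rhat q (0,0) (0,1) = (0:ℂ) from rfl, show Rhat q (0,0) (0,2) = (0:ℂ) from rfl, show Rhat q (0,0) (1,0) = (0:ℂ) from rfl, show Rhat q (0,0) (1,1) = (0:ℂ) from rfl, show Rhat q (0,0) (1,2) = (0:ℂ) from rfl, show Rhat q (0,0) (2,0) = (0:ℂ) from rfl, show Rhat q (0,0) (2,1) = (0:ℂ) from rfl, show Rhat q (0,0) (2,2) = (0:ℂ) from rfl, zero_smul, add_zero, zero_add] at h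
    rw [h]; module
  have A01 : D.x 0 * D.ξ 1 = ((q:ℂ) * ((q:ℂ) - (q:ℂ)⁻¹)) • (D.ξ 0 * D.x 1) + ((q:ℂ) * (1:ℂ)) • (D.ξ 1 * D.x 0) := by
    have h := D.rel_xξ 0 1
    simp only [Fin.sum_univ_three, show Rhat q (0,1) (0,0) = (0:ℂ) from rfl, show Rhat q (0,1) (0,1) = ((q:ℂ) - (q:ℂ)⁻¹) from rfl, show Rhat q (0,1) (0,2) = (0:ℂ) from rfl, show Rhat q (0,1) (1,0) = (1:ℂ) from rfl, show Rhat q (0,1) (1,1) = (0:ℂ) from rfl, show Rhat q (0,1) (1,2) = (0:ℂ) from rfl, show Rhat q (0,1) (2,0) = (0:ℂ) from rfl, show Rhat q (0,1) (2,1) = (0:ℂ) from rfl, show Rhat q (0,1) (2,2) = (0:ℂ) from rfl, zero_smul, add_zero, zero_add] at h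
    rw [h]; module
  have A02 : D.x 0 * D.ξ 2 = ((q:ℂ) * (((q:ℂ) - (q:ℂ)⁻¹) * (1 - (q:ℂ)⁻¹))) • (D.ξ 0 * D.x 2) + ((q:ℂ) * (-((q:ℂ) - (q:ℂ)⁻¹) * ((Real.sqrt q : ℝ) : ℂ)⁻¹)) • (D.ξ 1 * D.x 1) + ((q:ℂ) * (q:ℂ)⁻¹) • (D.ξ 2 * D.x 0) := by
    have h := D.rel_xξ 0 2
    simp only [Fin.sum_univ_three, show Rhat q (0,2) (0,0) = (0:ℂ) from rfl, show Rhat q (0,2) (0,1) = (0:ℂ) from rfl, show Rhat q (0,2) (0,2) = (((q:ℂ) - (q:ℂ)⁻¹) * (1 - (q:ℂ)⁻¹)) from rfl, show Rhat q (0,2) (1,0) = (0:ℂ) from rfl, show Rhat q (0,2) (1,1) = (-((q:ℂ) - (q:ℂ)⁻¹) * ((Real.sqrt q : ℝ) : ℂ)⁻¹) from rfl, show Rhat q (0,2) (1,2) = (0:ℂ) from rfl, show Rhat q (0,2) (2,0) = (q:ℂ)⁻¹ from rfl, show Rhat q (0,2) (2,1) = (0:ℂ) from rfl, show Rhat q (0,2)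 (2,2) = (0:ℂ) from rfl, zero_smul, add_zero, zero_add] at h
    rw [h]; module
  have A10 : D.x 1 * D.ξ 0 = ((q:ℂ) * (1:ℂ)) • (D.ξ 0 * D.x 1) := by
    have h := D.rel_xξ 1 0
    simp only [Fin.sum_univ_three, show Rhat q (1,0) (0,0) = (0:ℂ) from rfl, show Rhat q (1,0) (0,1) = (1:ℂ) from rfl, show Rhat q (1,0) (0,2) = (0:ℂ) from rfl, show Rhat q (1,0) (1,0) = (0:ℂ) from rfl, show Rhat q (1,0) (1,1) = (0:ℂ) from rfl, show Rhat q (1,0) (1,2) = (0:ℂ) from rfl, show Rhat q (1,0) (2,0) = (0:ℂ) from rfl, show Rhat q (1,0) (2,1) = (0:ℂ) from rfl, show Rhat q (1,0) (2,2) = (0:ℂ) from rfl, zero_smul, add_zero, zero_add] at h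
    rw [h]; module
  have A11 : D.x 1 * D.ξ 1 = ((q:ℂ) * (-((q:ℂ) - (q:ℂ)⁻¹) * ((Real.sqrt q : ℝ) : ℂ)⁻¹)) • (D.ξ 0 * D.x 2) + ((q:ℂ) * (1:ℂ)) • (D.ξ 1 * D.x 1) := by
    have h := D.rel_xξ 1 1
    simp only [Fin.sum_univ_three, show Rhat q (1,1) (0,0) = (0:ℂ) from rfl, show Rhat q (1,1) (0,1) = (0:ℂ) from rfl, show Rhat q (1,1) (0,2) = (-((q:ℂ) - (q:ℂ)⁻¹) * ((Real.sqrt q : ℝ) : ℂ)⁻¹) from rfl, show Rhat q (1,1) (1,0) = (0:ℂ) from rfl, show Rhat q (1,1) (1,1) = (1:ℂ) from rfl, show Rhat q (1,1) (1,2) = (0:ℂ) from rfl, show Rhat q (1,1) (2,0) = (0:ℂ) from rfl, show Rhat q (1,1) (2,1) = (0:ℂ) from rfl, show Rhat q (1,1) (2,2) = (0:ℂ) from rfl, zero_smul, add_zero, zero_add] at h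
    rw [h]; module
  have A12 : D.x 1 * D.ξ 2 = ((q:ℂ) * ((q:ℂ) - (q:ℂ)⁻¹)) • (D.ξ 1 * D.x 2) + ((q:ℂ) * (1:ℂ)) • (D.ξ 2 * D.x 1) := by
    have h := D.rel_xξ 1 2
    simp only [Fin.sum_univ_three, show Rhat q (1,2) (0,0) = (0:ℂ) from rfl, show Rhat q (1,2) (0,1) = (0:ℂ) from rfl, show Rhat q (1,2) (0,2) = (0:ℂ) from rfl, show Rhat q (1,2) (1,0) = (0:ℂ) from rfl, show Rhat q (1,2) (1,1) = (0:ℂ) from rfl, show Rhat q (1,2) (1,2) = ((q:ℂ) - (q:ℂ)⁻¹) from rfl, show Rhat q (1,2) (2,0) = (0:ℂ) from rfl, show Rhat q (1,2) (2,1) = (1:ℂ) from rfl, show Rhat q (1,2) (2,2) = (0:ℂ) from rfl, zero_smul, add_zero, zero_add] at h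
    rw [h]; module
  have A20 : D.x 2 * D.ξ 0 = ((q:ℂ) * (q:ℂ)⁻¹) • (D.ξ 0 * D.x 2) := by
    have h := D.rel_xξ 2 0
    simp only [Fin.sum_univ_three, show Rhat q (2,0) (0,0) = (0:ℂ) from rfl, show Rhat q (2,0) (0,1) = (0:ℂ) from rfl, show Rhat q (2,0) (0,2) = (q:ℂ)⁻¹ from rfl, show Rhat q (2,0) (1,0) = (0:ℂ) from rfl, show Rhat q (2,0) (1,1) = (0:ℂ) from rfl, show Rhat q (2,0) (1,2) = (0:ℂ) from rfl, show Rhat q (2,0) (2,0) = (0:ℂ) from rfl, show Rhat q (2,0) (2,1) = (0:ℂ) from rfl, show Rhat q (2,0) (2,2) = (0:ℂ) from rfl, zero_smul, add_zero, zero_add] at h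
    rw [h]; module
  have A21 : D.x 2 * D.ξ 1 = ((q:ℂ) * (1:ℂ)) • (D.ξ 1 * D.x 2) := by
    have h := D.rel_xξ 2 1
    simp only [Fin.sum_univ_three, show Rhat q (2,1) (0,0) = (0:ℂ) from rfl, show Rhat q (2,1) (0,1) = (0:ℂ) from rfl, show Rhat q (2,1) (0,2) = (0:ℂ) from rfl, show Rhat q (2,1) (1,0) = (0:ℂ) from rfl, show Rhat q (2,1) (1,1) = (0:ℂ) from rfl, show Rhat q (2,1) (1,2) = (1:ℂ) from rfl, show Rhat q (2,1) (2,0) = (0:ℂ) from rfl, show Rhat q (2,1) (2,1) = (0:ℂ) from rfl, show Rhat q (2,1) (2,2) = (0:ℂ) from rfl, zero_smul, add_zero, zero_add] at h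
    rw [h]; module
  have A22 : D.x 2 * D.ξ 2 = ((q:ℂ) * (q:ℂ)) • (D.ξ 2 * D.x 2) := by
    have h := D.rel_xξ 2 2
    simp only [Fin.sum_univ_three, show Rhat q (2,2) (0,0) = (0:ℂ) from rfl, show Rhat q (2,2) (0,1) = (0:ℂ) from rfl, show Rhat q (2,2) (0,2) = (0:ℂ) from rfl, show Rhat q (2,2) (1,0) = (0:ℂ) from rfl, show Rhat q (2,2) (1,1) = (0:ℂ) from rfl, show Rhat q (2,2) (1,2) = (0:ℂ) from rfl, show Rhat q (2,2) (2,0) = (0:ℂ) from rfl, show Rhat q (2,2) (2,1) = (0:ℂ) from rfl, show Rhat q (2,2) (2,2) = (q:ℂ) from rfl, zero_smul, add_zero, zero_add] at h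
    rw [h]; module
  -- ξ-past-x rules
  have E00 : D.ξ 0 * D.x 0 = ((q:ℂ)⁻¹ * (q:ℂ)⁻¹) • (D.x 0 * D.ξ 0) := by
    rw [A00]; match_scalars <;> field_simp
  have E01 : D.ξ 0 * D.x 1 = (q:ℂ)⁻¹ • (D.x 1 * D.ξ 0) := by
    rw [A10]; match_scalars <;> field_simp
  have E02 : D.ξ 0 * D.x 2 = D.x 2 * D.ξ 0 := by
    rw [A20]; match_scalars <;> field_simp
  have E10 : D.ξ 1 * D.x 0 = (q:ℂ)⁻¹ • (D.x 0 * D.ξ 1) + (-(((q:ℂ) - (q:ℂ)⁻¹) * (q:ℂ)⁻¹)) • (D.x 1 * D.ξ 0) := by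
    rw [A01, A10]; match_scalars <;> (field_simp; try ring1)
  have E11 : D.ξ 1 * D.x 1 = (q:ℂ)⁻¹ • (D.x 1 * D.ξ 1) + (((q:ℂ) - (q:ℂ)⁻¹) * ((Real.sqrt q : ℝ) : ℂ)⁻¹) • (D.x 2 * D.ξ 0) := by
    rw [A11, A20]; match_scalars <;> (field_simp; try ring1)
  have E12 : D.ξ 1 * D.x 2 = (q:ℂ)⁻¹ • (D.x 2 * D.ξ 1) := by
    rw [A21]; match_scalars <;> field_simp
  have E20 : D.ξ 2 * D.x 0 = D.x 0 * D.ξ 2 + (((q:ℂ) - (q:ℂ)⁻¹) * (1 - (q:ℂ)⁻¹)) • (D.x 2 * D.ξ 0)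
      + (((q:ℂ) - (q:ℂ)⁻¹) * ((Real.sqrt q : ℝ) : ℂ)⁻¹) • (D.x 1 * D.ξ 1) := by
    rw [A02, A20, A11]; match_scalars <;> (simp only [hq']; field_simp; try ring1)
  have E21 : D.ξ 2 * D.x 1 = (q:ℂ)⁻¹ • (D.x 1 * D.ξ 2) + (-(((q:ℂ) - (q:ℂ)⁻¹) * (q:ℂ)⁻¹)) • (D.x 2 * D.ξ 1) := by
    rw [A12, A21]; match_scalars <;> (field_simp; try ring1)
  have E22 : D.ξ 2 * D.x 2 = ((q:ℂ)⁻¹ * (q:ℂ)⁻¹) • (D.x 2 * D.ξ 2) := by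
    rw [A22]; match_scalars <;> field_simp
  -- Mmat values
  have M00 : Mmat D 0 0 = D.u := rfl
  have M01 : Mmat D 0 1 = 0 := rfl
  have M02 : Mmat D 0 2 = 0 := rfl
  have M10 : Mmat D 1 0 = ((Real.sqrt q * (q + 1) : ℝ) : ℂ) • (D.ρi * D.u * D.x 2) := rfl
  have M11 : Mmat D 1 1 = D.ρi := rfl
  have M12 : Mmat D 1 2 = 0 := rfl
  have M20 : Mmat D 2 0 = -(((Real.sqrt q * q * (q + 1) : ℝ)) : ℂ) • (D.ρi * D.ρi * D.u * (D.x 2 * D.x 2)) := rfl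
  have M21 : Mmat D 2 1 = -(((q + 1 : ℝ)) : ℂ) • (D.ρi * D.ρi * D.x 2) := rfl
  have M22 : Mmat D 2 2 = D.ρi * D.ρi * D.x 1 := rfl
  have c00 : theta D 0 * D.x 0 = D.x 0 * theta D 0 := by
    simp only [theta, Fin.sum_univ_three, M00, M01, M02, M10, M11, M12, M20, M21, M22, zero_mul, add_zero, zero_add]
    simp only [mul_assoc, mul_add, add_mul, mul_sub, sub_mul, smul_add, smul_sub,
        smul_mul_assoc, mul_smul_comm, smul_smul, one_mul, mul_one,
        E00, mulrw E00, E01, mulrw E01, E02, mulrw E02, E10, mulrw E10, E11, mulrw E11,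
        E12, mulrw E12, E20, mulrw E20, E21, mulrw E21, E22, mulrw E22,
        D.rel_x12, mulrw D.rel_x12, X21, mulrw X21, X20, mulrw X20,
        V0, mulrw V0, V2, mulrw V2, D.rel_ux, mulrw D.rel_ux, D.rel_xu, mulrw D.rel_xu,
        Lx 0, mulrw (Lx 0), Lx 1, mulrw (Lx 1), Lx 2, mulrw (Lx 2),
        P 0, mulrw (P 0), P 1, mulrw (P 1), P 2, mulrw (P 2)]
    try match_scalars <;> (try push_cast; try simp only [hq']; try rw [← sub_eq_zero]; try field_simp; try ring_nf; try simp only [inv_pow]; try field_simp; try ring1)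
  have c01 : theta D 0 * D.x 1 = D.x 1 * theta D 0 := by
    simp only [theta, Fin.sum_univ_three, M00, M01, M02, M10, M11, M12, M20, M21, M22, zero_mul, add_zero, zero_add]
    simp only [mul_assoc, mul_add, add_mul, mul_sub, sub_mul, smul_add, smul_sub,
        smul_mul_assoc, mul_smul_comm, smul_smul, one_mul, mul_one,
        E00, mulrw E00, E01, mulrw E01, E02, mulrw E02, E10, mulrw E10, E11, mulrw E11,
        E12, mulrw E12, E20, mulrw E20, E21, mulrw E21, E22, mulrw E22,
        D.rel_x12, mulrw D.rel_x12, X21, mulrw X21, X20, mulrw X20,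
        V0, mulrw V0, V2, mulrw V2, D.rel_ux, mulrw D.rel_ux, D.rel_xu, mulrw D.rel_xu,
        Lx 0, mulrw (Lx 0), Lx 1, mulrw (Lx 1), Lx 2, mulrw (Lx 2),
        P 0, mulrw (P 0), P 1, mulrw (P 1), P 2, mulrw (P 2)]
    try match_scalars <;> (try push_cast; try simp only [hq']; try rw [← sub_eq_zero]; try field_simp; try ring_nf; try simp only [inv_pow]; try field_simp; try ring1)
  have c02 : theta D 0 * D.x 2 = D.x 2 * theta D 0 := by
    simp only [theta, Fin.sum_univ_three, M00, M01, M02, M10, M11, M12, M20, M21, M22, zero_mul, add_zero, zero_add]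
    simp only [mul_assoc, mul_add, add_mul, mul_sub, sub_mul, smul_add, smul_sub,
        smul_mul_assoc, mul_smul_comm, smul_smul, one_mul, mul_one,
        E00, mulrw E00, E01, mulrw E01, E02, mulrw E02, E10, mulrw E10, E11, mulrw E11,
        E12, mulrw E12, E20, mulrw E20, E21, mulrw E21, E22, mulrw E22,
        D.rel_x12, mulrw D.rel_x12, X21, mulrw X21, X20, mulrw X20,
        V0, mulrw V0, V2, mulrw V2, D.rel_ux, mulrw D.rel_ux, D.rel_xu, mulrw D.rel_xu,
        Lx 0, mulrw (Lx 0), Lx 1, mulrw (Lx 1), Lx 2, mulrw (Lx 2),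
        P 0, mulrw (P 0), P 1, mulrw (P 1), P 2, mulrw (P 2)]
    try match_scalars <;> (try push_cast; try simp only [hq']; try rw [← sub_eq_zero]; try field_simp; try ring_nf; try simp only [inv_pow]; try field_simp; try ring1)
  have c10 : theta D 1 * D.x 0 = D.x 0 * theta D 1 := by
    simp only [theta, Fin.sum_univ_three, M00, M01, M02, M10, M11, M12, M20, M21, M22, zero_mul, add_zero, zero_add]
    simp only [mul_assoc, mul_add, add_mul, mul_sub, sub_mul, smul_add, smul_sub,
        smul_mul_assoc, mul_smul_comm, smul_smul, one_mul, mul_one,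
        E00, mulrw E00, E01, mulrw E01, E02, mulrw E02, E10, mulrw E10, E11, mulrw E11,
        E12, mulrw E12, E20, mulrw E20, E21, mulrw E21, E22, mulrw E22,
        D.rel_x12, mulrw D.rel_x12, X21, mulrw X21, X20, mulrw X20,
        V0, mulrw V0, V2, mulrw V2, D.rel_ux, mulrw D.rel_ux, D.rel_xu, mulrw D.rel_xu,
        Lx 0, mulrw (Lx 0), Lx 1, mulrw (Lx 1), Lx 2, mulrw (Lx 2),
        P 0, mulrw (P 0), P 1, mulrw (P 1), P 2, mulrw (P 2)]
    try match_scalars <;> (try push_cast; try simp only [hq']; try rw [← sub_eq_zero]; try field_simp; try ring_nf; try simp only [inv_pow]; try field_simp; try ring1)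
  have c11 : theta D 1 * D.x 1 = D.x 1 * theta D 1 := by
    simp only [theta, Fin.sum_univ_three, M00, M01, M02, M10, M11, M12, M20, M21, M22, zero_mul, add_zero, zero_add]
    simp only [mul_assoc, mul_add, add_mul, mul_sub, sub_mul, smul_add, smul_sub,
        smul_mul_assoc, mul_smul_comm, smul_smul, one_mul, mul_one,
        E00, mulrw E00, E01, mulrw E01, E02, mulrw E02, E10, mulrw E10, E11, mulrw E11,
        E12, mulrw E12, E20, mulrw E20, E21, mulrw E21, E22, mulrw E22,
        D.rel_x12, mulrw D.rel_x12, X21, mulrw X21, X20, mulrw X20,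
        V0, mulrw V0, V2, mulrw V2, D.rel_ux, mulrw D.rel_ux, D.rel_xu, mulrw D.rel_xu,
        Lx 0, mulrw (Lx 0), Lx 1, mulrw (Lx 1), Lx 2, mulrw (Lx 2),
        P 0, mulrw (P 0), P 1, mulrw (P 1), P 2, mulrw (P 2)]
    try match_scalars <;> (try push_cast; try simp only [hq']; try rw [← sub_eq_zero]; try field_simp; try ring_nf; try simp only [inv_pow]; try field_simp; try ring1)
  have c12 : theta D 1 * D.x 2 = D.x 2 * theta D 1 := by
    simp only [theta, Fin.sum_univ_three, M00, M01, M02, M10, M11, M12, M20, M21, M22, zero_mul, add_zero, zero_add]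
    simp only [mul_assoc, mul_add, add_mul, mul_sub, sub_mul, smul_add, smul_sub,
        smul_mul_assoc, mul_smul_comm, smul_smul, one_mul, mul_one,
        E00, mulrw E00, E01, mulrw E01, E02, mulrw E02, E10, mulrw E10, E11, mulrw E11,
        E12, mulrw E12, E20, mulrw E20, E21, mulrw E21, E22, mulrw E22,
        D.rel_x12, mulrw D.rel_x12, X21, mulrw X21, X20, mulrw X20,
        V0, mulrw V0, V2, mulrw V2, D.rel_ux, mulrw D.rel_ux, D.rel_xu, mulrw D.rel_xu,
        Lx 0, mulrw (Lx 0), Lx 1, mulrw (Lx 1), Lx 2, mulrw (Lx 2),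
        P 0, mulrw (P 0), P 1, mulrw (P 1), P 2, mulrw (P 2)]
    try match_scalars <;> (try push_cast; try simp only [hq']; try rw [← sub_eq_zero]; try field_simp; try ring_nf; try simp only [inv_pow]; try field_simp; try ring1)
  have c20 : theta D 2 * D.x 0 = D.x 0 * theta D 2 := by
    simp only [theta, Fin.sum_univ_three, M00, M01, M02, M10, M11, M12, M20, M21, M22, zero_mul, add_zero, zero_add]
    simp only [mul_assoc, mul_add, add_mul, mul_sub, sub_mul, smul_add, smul_sub,
        smul_mul_assoc, mul_smul_comm, smul_smul, one_mul, mul_one,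
        E00, mulrw E00, E01, mulrw E01, E02, mulrw E02, E10, mulrw E10, E11, mulrw E11,
        E12, mulrw E12, E20, mulrw E20, E21, mulrw E21, E22, mulrw E22,
        D.rel_x12, mulrw D.rel_x12, X21, mulrw X21, X20, mulrw X20,
        V0, mulrw V0, V2, mulrw V2, D.rel_ux, mulrw D.rel_ux, D.rel_xu, mulrw D.rel_xu,
        Lx 0, mulrw (Lx 0), Lx 1, mulrw (Lx 1), Lx 2, mulrw (Lx 2),
        P 0, mulrw (P 0), P 1, mulrw (P 1), P 2, mulrw (P 2)]
    try match_scalars <;> (try push_cast; try simp only [hq']; try rw [← sub_eq_zero]; try field_simp; try ring_nf; try simp only [inv_pow]; try field_simp; try ring1)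
  have c21 : theta D 2 * D.x 1 = D.x 1 * theta D 2 := by
    simp only [theta, Fin.sum_univ_three, M00, M01, M02, M10, M11, M12, M20, M21, M22, zero_mul, add_zero, zero_add]
    simp only [mul_assoc, mul_add, add_mul, mul_sub, sub_mul, smul_add, smul_sub,
        smul_mul_assoc, mul_smul_comm, smul_smul, one_mul, mul_one,
        E00, mulrw E00, E01, mulrw E01, E02, mulrw E02, E10, mulrw E10, E11, mulrw E11,
        E12, mulrw E12, E20, mulrw E20, E21, mulrw E21, E22, mulrw E22,
        D.rel_x12, mulrw D.rel_x12, X21, mulrw X21, X20, mulrw X20,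
        V0, mulrw V0, V2, mulrw V2, D.rel_ux, mulrw D.rel_ux, D.rel_xu, mulrw D.rel_xu,
        Lx 0, mulrw (Lx 0), Lx 1, mulrw (Lx 1), Lx 2, mulrw (Lx 2),
        P 0, mulrw (P 0), P 1, mulrw (P 1), P 2, mulrw (P 2)]
    try match_scalars <;> (try push_cast; try simp only [hq']; try rw [← sub_eq_zero]; try field_simp; try ring_nf; try simp only [inv_pow]; try field_simp; try ring1)
  have c22 : theta D 2 * D.x 2 = D.x 2 * theta D 2 := by
    simp only [theta, Fin.sum_univ_three, M00, M01, M02, M10, M11, M12, M20, M21, M22, zero_mul, add_zero, zero_add]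
    simp only [mul_assoc, mul_add, add_mul, mul_sub, sub_mul, smul_add, smul_sub,
        smul_mul_assoc, mul_smul_comm, smul_smul, one_mul, mul_one,
        E00, mulrw E00, E01, mulrw E01, E02, mulrw E02, E10, mulrw E10, E11, mulrw E11,
        E12, mulrw E12, E20, mulrw E20, E21, mulrw E21, E22, mulrw E22,
        D.rel_x12, mulrw D.rel_x12, X21, mulrw X21, X20, mulrw X20,
        V0, mulrw V0, V2, mulrw V2, D.rel_ux, mulrw D.rel_ux, D.rel_xu, mulrw D.rel_xu,
        Lx 0, mulrw (Lx 0), Lx 1, mulrw (Lx 1), Lx 2, mulrw (Lx 2),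
        P 0, mulrw (P 0), P 1, mulrw (P 1), P 2, mulrw (P 2)]
    try match_scalars <;> (try push_cast; try simp only [hq']; try rw [← sub_eq_zero]; try field_simp; try ring_nf; try simp only [inv_pow]; try field_simp; try ring1)
  intro a i
  fin_cases a <;> fin_cases i
  exacts [c00, c01, c02, c10, c11, c12, c20, c21, c22]

end
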